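/- Let q ∈ ℂ[x,y] be a polynomial whose leading quasi-homogeneous part with respect to the weights (k,l) equals x^k + y^l, where k, l ≥ 2 are coprime integers. Then for every δ > 0 there exists r > 0 such that for all (x,y) ∈ ℂ²: if ∂q/∂y (x,y) = 0 and |q(x,y)| < δ, then |x| < r. -/

import Mathlib

/-!
Write `q = x^k + y^l + p` with every monomial of `p` of weighted degree `< kl`, and measure a point
by the scale `t ≥ 1` with `|x| ≤ t^l`, `|y| ≤ t^k`, `t^{kl} = max(1, |x|^k, |y|^l)`. Then
`|p| = O(t^{kl-1})` and `|∂p/∂y| = O(t^{kl-k-1})`. At a critical point `l y^{l-1} = -∂p/∂y`, so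
`|y|^l ≤ t^k |y|^{l-1} = O(t^{kl-1})`, and `|q| < δ` then forces `|x|^k = O(t^{kl-1})` as well.
Hence `t^{kl} = O(t^{kl-1})`: the scale `t`, and with it `|x| ≤ t^l`, is bounded.
-/

open MvPolynomial

/-- The weighted degree of `r ∈ ℂ[x,y]` with respect to the weights `deg x = l`,
`deg y = k`: the maximum of `l·i + k·j` over monomials `x^i y^j` of `r`. -/
noncomputable def wdeg (k l : ℕ) (r : MvPolynomial (Fin 2) ℂ) : ℕ :=
  r.weightedTotalDegree ![l, k]

/-- The leading quasi-homogeneous part of `r ∈ ℂ[x,y]` with respect to the weights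
`(k, l)`: the sum of the monomials `a_{ij} x^i y^j` of `r` with `l·i + k·j` maximal. -/
noncomputable def leadingPart (k l : ℕ) (r : MvPolynomial (Fin 2) ℂ) :
    MvPolynomial (Fin 2) ℂ :=
  ∑ s ∈ r.support.filter (fun s => l * s 0 + k * s 1 = wdeg k l r),
    monomial s (coeff s r)

section WeightedBounds

variable {σ R : Type*}

theorem weightedTotalDegree_pderiv_le [CommSemiring R] (w : σ → ℕ) (i : σ)
    (p : MvPolynomial σ R) :
    (pderiv i p).weightedTotalDegree w ≤ p.weightedTotalDegree w - w i := by
  refine Finset.sup_le fun s hs => ?_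
  have hsi : s + Finsupp.single i 1 ∈ p.support := by
    rw [mem_support_iff, coeff_pderiv] at hs
    exact mem_support_iff.mpr (left_ne_zero_of_mul hs)
  have := le_weightedTotalDegree w hsi
  rw [map_add, Finsupp.weight_single, one_smul] at this
  omega

theorem norm_eval_le_of_weightedTotalDegree_le [Fintype σ] [NormedCommRing R] [NormOneClass R]
    (w : σ → ℕ) {p : MvPolynomial σ R} {D : ℕ} (hD : p.weightedTotalDegree w ≤ D)
    {v : σ → R} {t : ℝ} (ht : 1 ≤ t) (hv : ∀ i, ‖v i‖ ≤ t ^ w i) :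
    ‖eval v p‖ ≤ (∑ s ∈ p.support, ‖coeff s p‖) * t ^ D := by
  rw [eval_eq', Finset.sum_mul]
  refine (norm_sum_le _ _).trans (Finset.sum_le_sum fun s hs => ?_)
  refine (norm_mul_le _ _).trans (mul_le_mul_of_nonneg_left ?_ (norm_nonneg _))
  calc ‖∏ i, v i ^ s i‖ ≤ ∏ i, ‖v i‖ ^ s i :=
        (Finset.norm_prod_le _ _).trans (Finset.prod_le_prod (fun _ _ => norm_nonneg _)
          fun i _ => norm_pow_le _ _)
    _ ≤ ∏ i, (t ^ w i) ^ s i :=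
        Finset.prod_le_prod (fun _ _ => by positivity) fun i _ => by gcongr; exact hv i
    _ = t ^ Finsupp.weight w s := by
        simp only [← pow_mul, Finset.prod_pow_eq_pow_sum, Finsupp.weight_eq_sum, smul_eq_mul,
          mul_comm]
    _ ≤ t ^ D := pow_le_pow_right₀ ht ((le_weightedTotalDegree w hs).trans hD)

end WeightedBounds

theorem weight_fin_two (k l : ℕ) (s : Fin 2 →₀ ℕ) :
    Finsupp.weight ![l, k] s = l * s 0 + k * s 1 := by
  simp [Finsupp.weight_eq_sum, mul_comm]

theorem coeff_leadingPart (k l : ℕ) (r : MvPolynomial (Fin 2) ℂ) (s : Fin 2 →₀ ℕ) :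
    coeff s (leadingPart k l r) =
      if l * s 0 + k * s 1 = wdeg k l r then coeff s r else 0 := by
  classical
  simp only [leadingPart, coeff_sum, coeff_monomial, Finset.sum_ite_eq', Finset.mem_filter,
    mem_support_iff]
  split_ifs <;> tauto

theorem weightedTotalDegree_sub_leadingPart_le (k l : ℕ) (r : MvPolynomial (Fin 2) ℂ) :
    (r - leadingPart k l r).weightedTotalDegree ![l, k] ≤ wdeg k l r - 1 := by
  refine Finset.sup_le fun s hs => ?_
  rw [mem_support_iff, coeff_sub, coeff_leadingPart] at hs
  have hle : Finsupp.weight ![l, k] s ≤ wdeg k l r := by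
    split_ifs at hs with h
    · simp at hs
    · exact le_weightedTotalDegree _ (mem_support_iff.mpr (by simpa using hs))
  have hne : Finsupp.weight ![l, k] s ≠ wdeg k l r := by
    rw [weight_fin_two]; intro h; simp [h] at hs
  omega

theorem wdeg_eq_of_leadingPart_eq {k l : ℕ} (hk : k ≠ 0) {q : MvPolynomial (Fin 2) ℂ}
    (hlead : leadingPart k l q = X 0 ^ k + X 1 ^ l) : wdeg k l q = k * l := by
  have hcoeff := coeff_leadingPart k l q (Finsupp.single 0 k)
  have hne : Finsupp.single (1 : Fin 2) l ≠ Finsupp.single 0 k := by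
    simp [Finsupp.single_eq_single_iff, hk]
  rw [hlead, coeff_add, coeff_X_pow, coeff_X_pow, if_pos rfl, if_neg hne] at hcoeff
  split_ifs at hcoeff with h
  · simpa [mul_comm] using h.symm
  · simp at hcoeff

theorem exists_weighted_scale {a b : ℝ} (ha : 0 ≤ a) (hb : 0 ≤ b) {k l : ℕ} (hk : k ≠ 0)
    (hl : l ≠ 0) :
    ∃ t : ℝ, 1 ≤ t ∧ a ≤ t ^ l ∧ b ≤ t ^ k ∧ t ^ (k * l) ≤ max 1 (max (a ^ k) (b ^ l)) := by
  have hal : (a ^ (l : ℝ)⁻¹) ^ l = a := Real.rpow_inv_natCast_pow ha hl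
  have hbk : (b ^ (k : ℝ)⁻¹) ^ k = b := Real.rpow_inv_natCast_pow hb hk
  set t := max 1 (max (a ^ (l : ℝ)⁻¹) (b ^ (k : ℝ)⁻¹))
  have ht : 1 ≤ t := le_max_left _ _
  refine ⟨t, ht, ?_, ?_, ?_⟩
  · exact hal ▸ pow_le_pow_left₀ (by positivity) ((le_max_left _ _).trans (le_max_right _ _)) l
  · exact hbk ▸ pow_le_pow_left₀ (by positivity) ((le_max_right _ _).trans (le_max_right _ _)) k
  · rcases max_choice 1 (max (a ^ (l : ℝ)⁻¹) (b ^ (k : ℝ)⁻¹)) with h | h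
    · simp [show t = 1 from h]
    · rcases max_choice (a ^ (l : ℝ)⁻¹) (b ^ (k : ℝ)⁻¹) with h' | h'
      · rw [show t = _ from h.trans h', mul_comm, pow_mul, hal]
        exact (le_max_left _ _).trans (le_max_right _ _)
      · rw [show t = _ from h.trans h', pow_mul, hbk]
        exact (le_max_right _ _).trans (le_max_right _ _)

theorem norm_pow_le_of_critical {k l : ℕ} (hl : 2 ≤ l) {y e : ℂ} {t C : ℝ}
    (hyt : ‖y‖ ≤ t ^ k) (he : ‖e‖ ≤ C * t ^ (k * l - 1 - k))
    (hcrit : l * y ^ (l - 1) + e = 0) :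
    ‖y‖ ^ l ≤ C * t ^ (k * l - 1) := by
  have hnorm : (l : ℝ) * ‖y‖ ^ (l - 1) = ‖e‖ := by
    rw [eq_neg_of_add_eq_zero_right hcrit, norm_neg, norm_mul, norm_pow, Complex.norm_natCast]
  have hexp : k + (k * l - 1 - k) = k * l - 1 := by
    have := Nat.mul_le_mul_left k hl
    omega
  calc ‖y‖ ^ l = ‖y‖ * ‖y‖ ^ (l - 1) := by rw [← pow_succ', Nat.sub_add_cancel (by omega)]
    _ ≤ t ^ k * (C * t ^ (k * l - 1 - k)) := by
        refine mul_le_mul hyt (le_trans ?_ (hnorm.trans_le he)) (by positivity)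
          ((norm_nonneg y).trans hyt)
        exact le_mul_of_one_le_left (by positivity) (by norm_cast; omega)
    _ = C * t ^ (k * l - 1) := by rw [mul_left_comm, ← pow_add, hexp]

theorem scale_le_of_critical {k l : ℕ} (hk : k ≠ 0) (hl : 2 ≤ l) {x y e e' : ℂ} {t δ C C' : ℝ}
    (ht : 1 ≤ t) (hyt : ‖y‖ ≤ t ^ k)
    (hmax : t ^ (k * l) ≤ max 1 (max (‖x‖ ^ k) (‖y‖ ^ l)))
    (he : ‖e‖ ≤ C * t ^ (k * l - 1)) (he' : ‖e'‖ ≤ C' * t ^ (k * l - 1 - k))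
    (hq : ‖x ^ k + y ^ l + e‖ < δ) (hcrit : l * y ^ (l - 1) + e' = 0) :
    t ≤ δ + C + C' + 1 := by
  set T := t ^ (k * l - 1)
  have hT : 1 ≤ T := one_le_pow₀ ht
  have hC : 0 ≤ C := nonneg_of_mul_nonneg_left ((norm_nonneg e).trans he) (by positivity)
  have hC' : 0 ≤ C' := nonneg_of_mul_nonneg_left ((norm_nonneg e').trans he') (by positivity)
  have hδ : 0 < δ := (norm_nonneg _).trans_lt hq
  have hy : ‖y‖ ^ l ≤ C' * T := norm_pow_le_of_critical hl hyt he' hcrit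
  have hx : ‖x‖ ^ k ≤ δ + C' * T + C * T := by
    have : ‖x ^ k‖ ≤ ‖x ^ k + y ^ l + e‖ + ‖y ^ l‖ + ‖e‖ :=
      calc ‖x ^ k‖ = ‖x ^ k + y ^ l + e - y ^ l - e‖ := by ring_nf
        _ ≤ ‖x ^ k + y ^ l + e - y ^ l‖ + ‖e‖ := norm_sub_le _ _
        _ ≤ _ := by gcongr; exact norm_sub_le _ _
    rw [norm_pow, norm_pow] at this
    linarith
  have hmul : T * t ≤ (δ + C + C' + 1) * T := by
    rw [← pow_succ, Nat.sub_add_cancel (Nat.one_le_iff_ne_zero.mpr (by positivity))]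
    refine hmax.trans (max_le ?_ (max_le ?_ ?_)) <;> nlinarith
  exact le_of_mul_le_mul_left (by linarith) (by linarith : (0 : ℝ) < T)

theorem critical_points_over_bounded_disc_general
    (q : MvPolynomial (Fin 2) ℂ)
    (k l : ℕ) (hk : 2 ≤ k) (hl : 2 ≤ l)
    (hlead : leadingPart k l q = X 0 ^ k + X 1 ^ l) :
    ∀ δ : ℝ, 0 < δ → ∃ r : ℝ, 0 < r ∧ ∀ x y : ℂ,
      eval ![x, y] (pderiv 1 q) = 0 → ‖eval ![x, y] q‖ < δ →
      ‖x‖ < r := by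
  intro δ hδ
  obtain ⟨p, hp, rfl⟩ : ∃ p : MvPolynomial (Fin 2) ℂ,
      p.weightedTotalDegree ![l, k] ≤ k * l - 1 ∧ q = X 0 ^ k + X 1 ^ l + p := by
    refine ⟨_, ?_, (add_sub_cancel _ q).symm⟩
    simpa [hlead, wdeg_eq_of_leadingPart_eq (by omega) hlead] using
      weightedTotalDegree_sub_leadingPart_le k l q
  set C := ∑ s ∈ p.support, ‖coeff s p‖
  set C' := ∑ s ∈ (pderiv 1 p).support, ‖coeff s (pderiv 1 p)‖
  refine ⟨(δ + C + C' + 1) ^ l + 1, by positivity, fun x y hcrit hq => ?_⟩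
  obtain ⟨t, ht, hxt, hyt, hmax⟩ :=
    exists_weighted_scale (norm_nonneg x) (norm_nonneg y) (k := k) (l := l) (by omega) (by omega)
  have hv : ∀ i, ‖![x, y] i‖ ≤ t ^ ![l, k] i := Fin.forall_fin_two.mpr ⟨hxt, hyt⟩
  have he := norm_eval_le_of_weightedTotalDegree_le _ hp ht hv
  have he' := norm_eval_le_of_weightedTotalDegree_le _
    ((weightedTotalDegree_pderiv_le _ 1 p).trans (Nat.sub_le_sub_right hp _)) ht hv
  simp only [map_add, map_mul, map_pow, map_natCast, pderiv_pow, pderiv_X_self,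
    pderiv_X_of_ne zero_ne_one, mul_zero, zero_add, mul_one, eval_X,
    Matrix.cons_val_zero, Matrix.cons_val_one, Matrix.cons_val_fin_one] at hcrit hq
  have htR := scale_le_of_critical (by omega) hl ht hyt hmax he he' hq hcrit
  calc ‖x‖ ≤ t ^ l := hxt
    _ ≤ (δ + C + C' + 1) ^ l := pow_le_pow_left₀ (by linarith) htR l
    _ < (δ + C + C' + 1) ^ l + 1 := lt_add_one _

/-- Lemma 3 of the paper: if the leading quasi-homogeneous part of `q` with respect to
coprime weights `(k, l)`, `k, l ≥ 2`, is `x^k + y^l`, then for every `δ > 0` there is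
`r > 0` such that every point `(x,y)` with `∂q/∂y(x,y) = 0` and `|q(x,y)| < δ` satisfies
`|x| < r`. -/
theorem critical_points_over_bounded_disc
    (q : MvPolynomial (Fin 2) ℂ)
    (k l : ℕ) (hk : 2 ≤ k) (hl : 2 ≤ l) (hkl : Nat.Coprime k l)
    (hlead : leadingPart k l q = X 0 ^ k + X 1 ^ l) :
    ∀ δ : ℝ, 0 < δ → ∃ r : ℝ, 0 < r ∧ ∀ x y : ℂ,
      eval ![x, y] (pderiv 1 q) = 0 → ‖eval ![x, y] q‖ < δ →
      ‖x‖ < r :=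
  critical_points_over_bounded_disc_general q k l hk hl hlead
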